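/- A Latin square L of order n has an orthogonal mate if and only if the chromatic number of its Latin square graph L_3(L,n) equals n. -/

import Mathlib

def IsLatin (n : ℕ) (L : Fin n → Fin n → Fin n) : Prop :=
  (∀ i, Function.Bijective (L i)) ∧ (∀ j, Function.Bijective fun i => L i j)

def latinGraph (n : ℕ) (L : Fin n → Fin n → Fin n) : SimpleGraph (Fin n × Fin n) :=
  SimpleGraph.fromRel fun a b => a.1 = b.1 ∨ a.2 = b.2 ∨ L a.1 a.2 = L b.1 b.2

def IsKDominating {V : Type*} (G : SimpleGraph V) (k : ℕ) (S : Set V) : Prop :=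
  ∀ v ∉ S, k ≤ (S ∩ G.neighborSet v).ncard

def IsTransversal (n : ℕ) (L : Fin n → Fin n → Fin n) (S : Set (Fin n × Fin n)) : Prop :=
  (∀ i : Fin n, ∃! c, c ∈ S ∧ c.1 = i) ∧
  (∀ j : Fin n, ∃! c, c ∈ S ∧ c.2 = j) ∧
  (∀ s : Fin n, ∃! c, c ∈ S ∧ L c.1 c.2 = s)

def IsQuasiTransversal (n : ℕ) (L : Fin n → Fin n → Fin n) (S : Set (Fin n × Fin n)) : Prop :=
  (∃ i0, ({c ∈ S | c.1 = i0}).ncard = 2 ∧ ∀ i, i ≠ i0 → ({c ∈ S | c.1 = i}).ncard = 1) ∧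
  (∃ j0, ({c ∈ S | c.2 = j0}).ncard = 2 ∧ ∀ j, j ≠ j0 → ({c ∈ S | c.2 = j}).ncard = 1) ∧
  (∃ s0, ({c ∈ S | L c.1 c.2 = s0}).ncard = 2 ∧ ∀ s, s ≠ s0 → ({c ∈ S | L c.1 c.2 = s}).ncard = 1)

def IsPartialTransversal (n : ℕ) (L : Fin n → Fin n → Fin n) (S : Set (Fin n × Fin n)) : Prop :=
  ∀ a ∈ S, ∀ b ∈ S, a ≠ b → a.1 ≠ b.1 ∧ a.2 ≠ b.2 ∧ L a.1 a.2 ≠ L b.1 b.2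

def IsKPlex (n : ℕ) (L : Fin n → Fin n → Fin n) (k : ℕ) (S : Set (Fin n × Fin n)) : Prop :=
  (∀ i, ({c ∈ S | c.1 = i}).ncard = k) ∧ (∀ j, ({c ∈ S | c.2 = j}).ncard = k) ∧
  (∀ s, ({c ∈ S | L c.1 c.2 = s}).ncard = k)

noncomputable def gamma3 (n : ℕ) (L : Fin n → Fin n → Fin n) : ℕ :=
  sInf {m | ∃ S : Set (Fin n × Fin n), IsKDominating (latinGraph n L) 3 S ∧ S.ncard = m}

noncomputable def domatic3 (n : ℕ) (L : Fin n → Fin n → Fin n) : ℕ :=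
  sSup {t | ∃ P : Fin t → Set (Fin n × Fin n),
    (Pairwise fun a b => Disjoint (P a) (P b)) ∧ (⋃ i, P i) = Set.univ ∧
    ∀ i, IsKDominating (latinGraph n L) 3 (P i)}

/-! An array `B` is a Latin square orthogonal to `L` exactly when two cells sharing a row, a
column or an `L`-symbol never carry the same entry of `B` (on a finite row or column, injective
means bijective), i.e. when `B` is a proper `n`-colouring of `L_3(L, n)`. A row is an `n`-clique,
so `χ ≥ n` always, and `χ = n` is equivalent to `n`-colourability. -/

open Function SimpleGraph

lemma latinGraph_adj {n : ℕ} {L : Fin n → Fin n → Fin n} {a b : Fin n × Fin n} :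
    (latinGraph n L).Adj a b ↔
      a ≠ b ∧ (a.1 = b.1 ∨ a.2 = b.2 ∨ L a.1 a.2 = L b.1 b.2) := by
  simp only [latinGraph, fromRel_adj, eq_comm (a := b.1), eq_comm (a := b.2),
    eq_comm (a := L b.1 b.2), or_self]

lemma isLatin_and_injective_iff_adj_ne {n : ℕ} {L B : Fin n → Fin n → Fin n} :
    (IsLatin n B ∧ Injective fun c : Fin n × Fin n => (L c.1 c.2, B c.1 c.2)) ↔
      ∀ a b, (latinGraph n L).Adj a b → B a.1 a.2 ≠ B b.1 b.2 := by
  constructor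
  · rintro ⟨⟨hrow, hcol⟩, horth⟩ a b hab hB
    obtain ⟨hne, hrel⟩ := latinGraph_adj.mp hab
    apply hne
    rcases hrel with h | h | h
    · exact Prod.ext h ((hrow a.1).1 (by rwa [h] at hB ⊢))
    · exact Prod.ext ((hcol a.2).1 (by rwa [h] at hB ⊢)) h
    · exact horth (Prod.ext h hB)
  · intro hproper
    have hinj : ∀ a b : Fin n × Fin n,
        (a.1 = b.1 ∨ a.2 = b.2 ∨ L a.1 a.2 = L b.1 b.2) → B a.1 a.2 = B b.1 b.2 → a = b :=
      fun a b hrel hB => by_contra fun hne => hproper a b (latinGraph_adj.mpr ⟨hne, hrel⟩) hB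
    refine ⟨⟨fun i => ?_, fun j => ?_⟩, fun a b h => ?_⟩
    · exact Finite.injective_iff_bijective.mp fun j j' h =>
        congrArg Prod.snd (hinj (i, j) (i, j') (Or.inl rfl) h)
    · exact Finite.injective_iff_bijective.mp fun i i' h =>
        congrArg Prod.fst (hinj (i, j) (i', j) (Or.inr (Or.inl rfl)) h)
    · exact hinj a b (Or.inr (Or.inr (Prod.ext_iff.mp h).1)) (Prod.ext_iff.mp h).2

lemma exists_orthogonal_mate_iff_colorable {n : ℕ} {L : Fin n → Fin n → Fin n} :
    (∃ B : Fin n → Fin n → Fin n, IsLatin n B ∧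
      Injective fun c : Fin n × Fin n => (L c.1 c.2, B c.1 c.2)) ↔
      (latinGraph n L).Colorable n := by
  simp only [isLatin_and_injective_iff_adj_ne]
  constructor
  · rintro ⟨B, hB⟩
    exact ⟨Coloring.mk (fun c => B c.1 c.2) (hB _ _)⟩
  · rintro ⟨C⟩
    exact ⟨fun i j => C (i, j), fun a b hab => C.valid hab⟩

lemma card_le_chromaticNumber_latinGraph (n : ℕ) (L : Fin n → Fin n → Fin n) :
    (n : ℕ∞) ≤ (latinGraph n L).chromaticNumber := by
  rcases n with _ | n
  · simp
  let firstRow : (⊤ : SimpleGraph (Fin (n + 1))) →g latinGraph (n + 1) L :=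
    ⟨fun j => (0, j), fun hj => latinGraph_adj.mpr ⟨by simpa using hj, Or.inl rfl⟩⟩
  simpa [chromaticNumber_top] using chromaticNumber_mono_of_hom firstRow

theorem stmt8_general (n : ℕ) (L : Fin n → Fin n → Fin n) :
    (∃ B : Fin n → Fin n → Fin n, IsLatin n B ∧
      Function.Injective fun c : Fin n × Fin n => (L c.1 c.2, B c.1 c.2)) ↔
    (latinGraph n L).chromaticNumber = (n : ℕ∞) := by
  rw [exists_orthogonal_mate_iff_colorable, ← chromaticNumber_le_iff_colorable]
  exact ⟨fun h => le_antisymm h (card_le_chromaticNumber_latinGraph n L), le_of_eq⟩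

theorem stmt8 (n : ℕ) (L : Fin n → Fin n → Fin n) (hL : IsLatin n L) :
    (∃ B : Fin n → Fin n → Fin n, IsLatin n B ∧
      Function.Injective fun c : Fin n × Fin n => (L c.1 c.2, B c.1 c.2)) ↔
    (latinGraph n L).chromaticNumber = (n : ℕ∞) :=
  stmt8_general n L
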